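/- arXiv:1407.2514 — 3 statements merged into one kernel-verified Lean document; each statement's English description precedes it below -/
import Mathlib

section
/- Let K > 0 and 0 < b < 1 be real numbers. Then for every real x, the function t ↦ K^{1-(b+it)} · e^{(b+it)x} / ((b+it)(b+it-1)) is Lebesgue integrable over ℝ and (1/(2π)) · ∫_{-∞}^{∞} K^{1-(b+it)} · e^{(b+it)x} / ((b+it)(b+it-1)) dt = max(e^x - K, 0) - e^x, where i is the imaginary unit and the left-hand side is a complex integral whose value is the real number on the right. -/
/-!
With `X = e^{-x}` the integrand is `X^{-s} F(s)` on the line `Re s = b`, where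
`F(s) = K^{1-s} / (s (s - 1))`, so the left-hand side is the inverse Mellin transform of `F`
at `X`. On the strip `0 < Re s < 1`, `F` is the Mellin transform of `t ↦ -min(t⁻¹, K)`:
after scaling to `K = 1`, the Mellin integral splits at `t = 1` into two power integrals.
Since `|s| |s - 1| ≥ b (1 - b) (1 + t²)` for `s = b + it`, `F` is integrable on the line, and
Mellin inversion returns `-min(e^x, K) = (e^x - K)₊ - e^x`.
-/

open MeasureTheory Complex Set

section MellinInversion

variable {E : Type*} [NormedAddCommGroup E] [NormedSpace ℂ E]

lemma Complex.VerticalIntegrable.integrable_cpow_smul {F : ℂ → E} {σ x : ℝ}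
    (hF : VerticalIntegrable F σ) (hx : 0 < x) :
    Integrable fun y : ℝ => (x : ℂ) ^ (-(σ + y * I)) • F (σ + y * I) := by
  refine hF.bdd_smul (x ^ (-σ)) ?_ (ae_of_all _ fun y => ?_)
  · exact (Continuous.const_cpow (by fun_prop)
      (.inl (ofReal_ne_zero.2 hx.ne'))).aestronglyMeasurable
  · simp [norm_cpow_eq_rpow_re_of_pos hx]

lemma mellinInv_eq_of_hasMellin [CompleteSpace E] {f : ℝ → E} {F : ℂ → E} {σ x : ℝ}
    (hx : 0 < x) (hf : ∀ y : ℝ, HasMellin f (σ + y * I) (F (σ + y * I)))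
    (hF : VerticalIntegrable F σ) (hfx : ContinuousAt f x) : mellinInv σ F x = f x := by
  have hmellin : ∀ y : ℝ, mellin f (σ + y * I) = F (σ + y * I) := fun y => (hf y).2
  have hconv : MellinConvergent f σ := by simpa using (hf 0).1
  have hvert : VerticalIntegrable (mellin f) σ := by
    simpa only [VerticalIntegrable, hmellin] using hF
  rw [← mellinInv_mellin_eq σ f hx hconv hvert hfx]
  simp only [mellinInv, hmellin]

end MellinInversion

lemma hasMellin_min_inv_one {s : ℂ} (hs0 : 0 < s.re) (hs1 : s.re < 1) :
    HasMellin (fun u : ℝ => ((min u⁻¹ 1 : ℝ) : ℂ)) s (1 / (s * (1 - s))) := by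
  have hs : s ≠ 0 := by rintro rfl; simp at hs0
  have hs' : 1 - s ≠ 0 := by intro h; rw [← sub_eq_zero.1 h] at hs1; simp at hs1
  have hIoc : EqOn (fun u : ℝ => (u : ℂ) ^ (s - 1) • ((min u⁻¹ 1 : ℝ) : ℂ))
      (fun u : ℝ => (u : ℂ) ^ (s - 1)) (Ioc 0 1) := fun u hu => by
    dsimp only
    rw [min_eq_right ((one_le_inv₀ hu.1).2 hu.2), ofReal_one, smul_eq_mul, mul_one]
  have hIoi : EqOn (fun u : ℝ => (u : ℂ) ^ (s - 1) • ((min u⁻¹ 1 : ℝ) : ℂ))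
      (fun u : ℝ => (u : ℂ) ^ (s - 2)) (Ioi 1) := fun u hu => by
    have hu0 : (u : ℂ) ≠ 0 := ofReal_ne_zero.2 (by linarith [mem_Ioi.1 hu])
    dsimp only
    rw [min_eq_left (inv_le_one_of_one_le₀ (le_of_lt hu)), smul_eq_mul, ofReal_inv,
      ← cpow_neg_one, ← cpow_add _ _ hu0]
    ring_nf
  have hintIoc : IntegrableOn (fun u : ℝ => (u : ℂ) ^ (s - 1)) (Ioc 0 1) :=
    (intervalIntegral.intervalIntegrable_cpow' (by simpa using hs0)).1
  have hintIoi : IntegrableOn (fun u : ℝ => (u : ℂ) ^ (s - 2)) (Ioi 1) :=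
    integrableOn_Ioi_cpow_of_lt (by simp; linarith) one_pos
  have hvalIoc : ∫ u : ℝ in Ioc 0 1, (u : ℂ) ^ (s - 1) = 1 / s := by
    rw [← intervalIntegral.integral_of_le zero_le_one, integral_cpow (.inl (by simpa using hs0))]
    simp [zero_cpow hs]
  have hvalIoi : ∫ u : ℝ in Ioi 1, (u : ℂ) ^ (s - 2) = 1 / (1 - s) := by
    rw [integral_Ioi_cpow_of_lt (by simp; linarith) one_pos, ofReal_one, one_cpow,
      show s - 2 + 1 = -(1 - s) by ring, div_neg, neg_div, neg_neg]
  have hintIoc' := hintIoc.congr_fun hIoc.symm measurableSet_Ioc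
  have hintIoi' := hintIoi.congr_fun hIoi.symm measurableSet_Ioi
  refine ⟨?_, ?_⟩
  · rw [MellinConvergent, ← Ioc_union_Ioi_eq_Ioi zero_le_one]
    exact hintIoc'.union hintIoi'
  rw [mellin, ← Ioc_union_Ioi_eq_Ioi zero_le_one,
    setIntegral_union Ioc_disjoint_Ioi_same measurableSet_Ioi hintIoc' hintIoi',
    setIntegral_congr_fun measurableSet_Ioc hIoc, setIntegral_congr_fun measurableSet_Ioi hIoi,
    hvalIoc, hvalIoi]
  field_simp
  ring

lemma hasMellin_neg_min_inv {K : ℝ} (hK : 0 < K) {s : ℂ} (hs0 : 0 < s.re) (hs1 : s.re < 1) :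
    HasMellin (fun t : ℝ => -((min t⁻¹ K : ℝ) : ℂ)) s
      ((K : ℂ) ^ (1 - s) / (s * (s - 1))) := by
  have h := hasMellin_min_inv_one hs0 hs1
  have hK' : (K : ℂ) ≠ 0 := ofReal_ne_zero.2 hK.ne'
  have hs' : 1 - s ≠ 0 := by intro h; rw [← sub_eq_zero.1 h] at hs1; simp at hs1
  have hs'' : s - 1 ≠ 0 := by intro h; rw [sub_eq_zero.1 h] at hs1; simp at hs1
  have hscale : (fun t : ℝ => -((min t⁻¹ K : ℝ) : ℂ)) =
      fun t => (-(K : ℂ)) • ((min (K * t)⁻¹ 1 : ℝ) : ℂ) := by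
    funext t
    rw [smul_eq_mul, neg_mul, ← ofReal_mul, mul_min_of_nonneg _ _ hK.le, mul_inv,
      mul_inv_cancel_left₀ hK.ne', mul_one]
  rw [hscale]
  refine ⟨((MellinConvergent.comp_mul_left hK).2 h.1).const_smul _, ?_⟩
  rw [mellin_const_smul, mellin_comp_mul_left (fun u : ℝ => ((min u⁻¹ 1 : ℝ) : ℂ)) s hK,
    h.2, cpow_sub _ _ hK', cpow_one, cpow_neg, smul_eq_mul, smul_eq_mul]
  field_simp
  ring

lemma mul_one_add_sq_le_norm_mul_norm_sub_one {b : ℝ} (hb0 : 0 < b) (hb1 : b < 1) (t : ℝ) :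
    b * (1 - b) * (1 + t ^ 2) ≤ ‖(b + t * I : ℂ)‖ * ‖(b + t * I : ℂ) - 1‖ := by
  have h : (b + t * I : ℂ) - 1 = ((b - 1 : ℝ) : ℂ) + t * I := by push_cast; ring
  have hb : 0 < b * (1 - b) := mul_pos hb0 (by linarith)
  have hb' : b * (1 - b) < 1 := by nlinarith
  rw [h, norm_add_mul_I, norm_add_mul_I, ← Real.sqrt_mul (by positivity),
    Real.le_sqrt (by positivity) (by positivity)]
  have hcoef₁ : 0 ≤ b ^ 2 + (1 - b) ^ 2 - 2 * (b * (1 - b)) ^ 2 := by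
    nlinarith [sq_nonneg (b - (1 - b))]
  have hcoef₂ : 0 ≤ 1 - (b * (1 - b)) ^ 2 := by nlinarith
  nlinarith [mul_nonneg (sq_nonneg t) hcoef₁, mul_nonneg (pow_nonneg (sq_nonneg t) 2) hcoef₂]

lemma norm_cpow_one_sub_div_le {K b : ℝ} (hK : 0 < K) (hb0 : 0 < b) (hb1 : b < 1) (t : ℝ) :
    ‖(K : ℂ) ^ (1 - (b + t * I)) / ((b + t * I) * ((b + t * I) - 1))‖ ≤
      K ^ (1 - b) / (b * (1 - b)) * (1 + t ^ 2)⁻¹ := by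
  have hb : 0 < b * (1 - b) := mul_pos hb0 (by linarith)
  rw [norm_div, norm_mul, norm_cpow_eq_rpow_re_of_pos hK, ← div_eq_mul_inv, div_div]
  simp only [sub_re, one_re, add_re, ofReal_re, mul_re, I_re, mul_zero, ofReal_im, I_im, mul_one,
    sub_self, add_zero]
  have := mul_one_add_sq_le_norm_mul_norm_sub_one hb0 hb1 t
  exact div_le_div_of_nonneg_left (by positivity) (by positivity) this

lemma verticalIntegrable_cpow_one_sub_div {K b : ℝ} (hK : 0 < K) (hb0 : 0 < b) (hb1 : b < 1) :
    VerticalIntegrable (fun s : ℂ => (K : ℂ) ^ (1 - s) / (s * (s - 1))) b := by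
  have hre : ∀ t : ℝ, (b + t * I : ℂ).re = b := by simp
  have hcont : Continuous fun t : ℝ =>
      (K : ℂ) ^ (1 - (b + t * I)) / ((b + t * I) * ((b + t * I) - 1)) := by
    refine Continuous.div (Continuous.const_cpow (by fun_prop) (.inl (ofReal_ne_zero.2 hK.ne')))
      (by fun_prop) fun t => mul_ne_zero ?_ ?_
    · intro h; have := hre t; rw [h] at this; simp at this; linarith
    · intro h; have := hre t; rw [sub_eq_zero.1 h] at this; simp at this; linarith
  exact (integrable_inv_one_add_sq.const_mul _).mono' hcont.aestronglyMeasurable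
    (ae_of_all _ (norm_cpow_one_sub_div_le hK hb0 hb1))

/-- Bromwich inversion for the covered-call payoff: for `K > 0`, `0 < b < 1` and every
real `x`, `(1/(2π)) ∫ K^{1-(b+it)} e^{(b+it)x} / ((b+it)(b+it-1)) dt = (e^x - K)_+ - e^x`. -/
theorem covered_call_payoff_laplace_inversion (K b : ℝ) (hK : 0 < K)
    (hb0 : 0 < b) (hb1 : b < 1) (x : ℝ) :
    Integrable (fun t : ℝ =>
      (K : ℂ) ^ ((1 : ℂ) - ((b : ℂ) + t * Complex.I)) *
        Complex.exp (((b : ℂ) + t * Complex.I) * x) /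
        (((b : ℂ) + t * Complex.I) * (((b : ℂ) + t * Complex.I) - 1))) ∧
    (1 / (2 * Real.pi) : ℂ) * ∫ t : ℝ,
        (K : ℂ) ^ ((1 : ℂ) - ((b : ℂ) + t * Complex.I)) *
          Complex.exp (((b : ℂ) + t * Complex.I) * x) /
          (((b : ℂ) + t * Complex.I) * (((b : ℂ) + t * Complex.I) - 1))
      = ((max (Real.exp x - K) 0 - Real.exp x : ℝ) : ℂ) := by
  have hX : 0 < Real.exp (-x) := Real.exp_pos _
  have hF := verticalIntegrable_cpow_one_sub_div hK hb0 hb1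
  have hintegrand : ∀ t : ℝ,
      (K : ℂ) ^ ((1 : ℂ) - ((b : ℂ) + t * I)) * cexp ((b + t * I) * x) /
        ((b + t * I) * ((b + t * I) - 1)) =
      (Real.exp (-x) : ℂ) ^ (-(b + t * I)) • ((K : ℂ) ^ (1 - (b + t * I)) /
        ((b + t * I) * ((b + t * I) - 1))) := fun t => by
    rw [cpow_def_of_ne_zero (ofReal_ne_zero.2 hX.ne'), ← ofReal_log hX.le, Real.log_exp,
      smul_eq_mul, show ((-x : ℝ) : ℂ) * -(b + t * I) = (b + t * I) * x by push_cast; ring]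
    ring
  simp_rw [hintegrand]
  refine ⟨hF.integrable_cpow_smul hX, ?_⟩
  have hcont : ContinuousAt (fun t : ℝ => -((min t⁻¹ K : ℝ) : ℂ)) (Real.exp (-x)) :=
    (continuous_ofReal.continuousAt.comp ((continuousAt_inv₀ hX.ne').min continuousAt_const)).neg
  have hinv := mellinInv_eq_of_hasMellin hX
    (fun y => hasMellin_neg_min_inv hK (by simpa using hb0) (by simpa using hb1)) hF hcont
  have hpayoff : -((min (Real.exp (-x))⁻¹ K : ℝ) : ℂ) =
      ((max (Real.exp x - K) 0 - Real.exp x : ℝ) : ℂ) := by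
    rw [Real.exp_neg, inv_inv, ← ofReal_neg]
    congr 1
    rcases le_total (Real.exp x) K with h | h <;> simp [h]
  rw [← hpayoff, ← hinv, mellinInv, real_smul]
  rw [ofReal_div, ofReal_one, ofReal_mul, ofReal_ofNat]
end

section
/- Let (Ω, F, P) be a probability space, W : Ω → ℝ a random variable, K > 0 and a > 1 real numbers, and suppose E[e^{aW}] < ∞. Then max(e^W - K, 0) is integrable, the function s ↦ K^{1-(a+is)} · E[e^{(a+is)W}] / ((a+is)(a+is-1)) is Lebesgue integrable over ℝ, and E[max(e^W - K, 0)] = (1/(2π)) · ∫_{-∞}^{∞} K^{1-(a+is)} · E[e^{(a+is)W}] / ((a+is)(a+is-1)) ds, where the complex integral on the right equals the real number on the left. -/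
open MeasureTheory Complex
open Set Real

/-!
Write the payoff as `(e^x - K)_+ = K · f (K e^{-x})` with `f t = (1/t - 1)_+`. On `Re s > 1` the
Mellin transform of `f` is `∫₀¹ t^{s-2} (1 - t) dt = 1 / (s (s - 1))`, so Mellin inversion on the
line `Re s = a` gives, for every real `x`,
`2π (e^x - K)_+ = ∫ K^{1-(a+is)} e^{(a+is)x} / ((a+is)(a+is-1)) ds`.
The integrand is bounded by `K^{1-a} e^{ax} / |(a+is)(a+is-1)|`, which is integrable for
`ds ⊗ P` because `E[e^{aW}] < ∞`; Fubini then turns the pointwise identity at `x = W` into the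
theorem.
-/

noncomputable def callKernel (t : ℝ) : ℂ := (max (t⁻¹ - 1) 0 : ℝ)

lemma cpow_smul_callKernel_eqOn (s : ℂ) :
    EqOn (fun t : ℝ => (t : ℂ) ^ (s - 1) • callKernel t)
      ((Ioc 0 1).indicator fun t : ℝ => (t : ℂ) ^ (s - 2) - (t : ℂ) ^ (s - 1)) (Ioi 0) := by
  intro t (ht : 0 < t)
  have ht' : (t : ℂ) ≠ 0 := by exact_mod_cast ht.ne'
  by_cases h1 : t ≤ 1
  · have hmax : max (t⁻¹ - 1) 0 = t⁻¹ - 1 := max_eq_left (by simp [one_le_inv₀ ht, h1])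
    have hpow : (t : ℂ) ^ (s - 2) = (t : ℂ) ^ (s - 1) * (t : ℂ)⁻¹ := by
      rw [show s - 2 = (s - 1) - 1 by ring, cpow_sub _ _ ht', cpow_one, div_eq_mul_inv]
    simp [callKernel, indicator_of_mem (show t ∈ Ioc 0 1 from ⟨ht, h1⟩), hmax, hpow, mul_sub]
  · have hmax : max (t⁻¹ - 1) 0 = 0 :=
      max_eq_right (by linarith [inv_lt_one_of_one_lt₀ (not_le.mp h1)])
    simp [callKernel, indicator_of_notMem (show t ∉ Ioc 0 1 from fun h => h1 h.2), hmax]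

lemma mellinConvergent_callKernel {s : ℂ} (hs : 1 < s.re) : MellinConvergent callKernel s := by
  rw [MellinConvergent, integrableOn_congr_fun (cpow_smul_callKernel_eqOn s) measurableSet_Ioi]
  refine (IntegrableOn.integrable_indicator ?_ measurableSet_Ioc).integrableOn
  exact (intervalIntegrable_iff_integrableOn_Ioc_of_le zero_le_one).mp
    ((intervalIntegral.intervalIntegrable_cpow' (by simp; linarith)).sub
      (intervalIntegral.intervalIntegrable_cpow' (by simp; linarith)))

lemma mellin_callKernel {s : ℂ} (hs : 1 < s.re) : mellin callKernel s = 1 / (s * (s - 1)) := by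
  have hs0 : s ≠ 0 := fun h => by simp [h] at hs; linarith
  have hs1 : s - 1 ≠ 0 := fun h => by rw [sub_eq_zero] at h; simp [h] at hs
  rw [mellin, setIntegral_congr_fun measurableSet_Ioi (cpow_smul_callKernel_eqOn s),
    integral_indicator measurableSet_Ioc, Measure.restrict_restrict measurableSet_Ioc,
    inter_eq_left.mpr Ioc_subset_Ioi_self, ← intervalIntegral.integral_of_le zero_le_one,
    intervalIntegral.integral_sub (intervalIntegral.intervalIntegrable_cpow' (by simp; linarith))
      (intervalIntegral.intervalIntegrable_cpow' (by simp; linarith)),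
    integral_cpow (Or.inl (by simp; linarith)), integral_cpow (Or.inl (by simp; linarith))]
  have h2 : s - 2 + 1 = s - 1 := by ring
  simp only [h2, sub_add_cancel, ofReal_one, one_cpow, ofReal_zero]
  rw [zero_cpow hs1, zero_cpow hs0]
  field_simp
  ring

lemma integrable_inv_sq_add_sq {c : ℝ} (hc : c ≠ 0) :
    Integrable fun y : ℝ => (c ^ 2 + y ^ 2)⁻¹ := by
  have h := (integrable_inv_one_add_sq.comp_div hc).const_mul (c ^ 2)⁻¹
  refine h.congr (Filter.Eventually.of_forall fun y => ?_)
  simp only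
  field_simp

lemma sq_add_sq_le_norm_mul_sub_one {a : ℝ} (ha : 1 ≤ a) (y : ℝ) :
    (a - 1) ^ 2 + y ^ 2 ≤ ‖((a : ℂ) + y * I) * ((a + y * I) - 1)‖ := by
  have hsub : (a : ℂ) + y * I - 1 = ((a - 1 : ℝ) : ℂ) + y * I := by push_cast; ring
  rw [norm_mul, hsub, norm_add_mul_I, norm_add_mul_I, ← Real.sqrt_mul (by positivity)]
  apply Real.le_sqrt_of_sq_le
  nlinarith [sq_nonneg y, sq_nonneg (a - 1)]

lemma integrable_inv_mul_sub_one {a : ℝ} (ha : 1 < a) :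
    Integrable fun y : ℝ => 1 / (((a : ℂ) + y * I) * ((a + y * I) - 1)) := by
  refine (integrable_inv_sq_add_sq (sub_ne_zero.mpr ha.ne')).mono'
    (by fun_prop : Measurable _).aestronglyMeasurable (Filter.Eventually.of_forall fun y => ?_)
  rw [norm_div, norm_one, one_div]
  exact inv_anti₀ (by have := sub_pos.mpr ha; positivity) (sq_add_sq_le_norm_mul_sub_one ha.le y)

lemma continuousAt_callKernel {t : ℝ} (ht : t ≠ 0) : ContinuousAt callKernel t := by
  unfold callKernel; fun_prop (disch := exact ht)

noncomputable def callIntegrand (K a x s : ℝ) : ℂ :=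
  (K : ℂ) ^ (1 - ((a : ℂ) + s * I)) * exp (((a : ℂ) + s * I) * x) /
    (((a : ℂ) + s * I) * ((a + s * I) - 1))

lemma callIntegrand_eq_smul_mellin {K : ℝ} (hK : 0 < K) {a : ℝ} (ha : 1 < a) (x s : ℝ) :
    callIntegrand K a x s =
      K • (((K * Real.exp (-x) : ℝ) : ℂ) ^ (-((a : ℂ) + s * I)) •
        mellin callKernel (a + s * I)) := by
  rw [mellin_callKernel (by simpa using ha), ofReal_mul,
    mul_cpow_ofReal_nonneg hK.le (Real.exp_pos _).le,
    cpow_def_of_ne_zero (ofReal_ne_zero.mpr (Real.exp_pos (-x)).ne'),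
    ← ofReal_log (Real.exp_pos _).le, Real.log_exp, callIntegrand, sub_eq_add_neg,
    cpow_add _ _ (ofReal_ne_zero.mpr hK.ne'), cpow_one]
  simp only [real_smul, smul_eq_mul]
  push_cast
  ring_nf

lemma integral_callIntegrand {K : ℝ} (hK : 0 < K) {a : ℝ} (ha : 1 < a) (x : ℝ) :
    ∫ s, callIntegrand K a x s = ((2 * π * max (Real.exp x - K) 0 : ℝ) : ℂ) := by
  have hx : 0 < K * Real.exp (-x) := by positivity
  have hinv := mellinInv_mellin_eq a callKernel hx (mellinConvergent_callKernel (by simpa using ha))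
    (by simpa [VerticalIntegrable, mellin_callKernel, ha] using integrable_inv_mul_sub_one ha)
    (continuousAt_callKernel hx.ne')
  simp_rw [callIntegrand_eq_smul_mellin hK ha]
  have hline : ∫ s : ℝ, ((K * Real.exp (-x) : ℝ) : ℂ) ^ (-((a : ℂ) + s * I)) •
      mellin callKernel (a + s * I) = 2 * π * callKernel (K * Real.exp (-x)) := by
    rw [mellinInv, real_smul] at hinv
    have h2π : (2 * π : ℂ) * ((1 / (2 * π) : ℝ) : ℂ) = 1 := by
      push_cast
      field_simp
    rw [← hinv, ← mul_assoc, h2π, one_mul]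
  have hpayoff : K * max ((K * Real.exp (-x))⁻¹ - 1) 0 = max (Real.exp x - K) 0 := by
    rw [mul_max_of_nonneg _ _ hK.le, mul_zero, mul_sub, mul_one, mul_inv, ← mul_assoc,
      mul_inv_cancel₀ hK.ne', one_mul, ← Real.exp_neg, neg_neg]
  rw [integral_smul, hline, callKernel, ← hpayoff, real_smul]
  push_cast
  ring

lemma norm_callIntegrand {K : ℝ} (hK : 0 < K) (a x s : ℝ) :
    ‖callIntegrand K a x s‖ =
      ‖1 / (((a : ℂ) + s * I) * ((a + s * I) - 1))‖ * (K ^ (1 - a) * Real.exp (a * x)) := by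
  rw [callIntegrand, norm_div, norm_mul, norm_cpow_eq_rpow_re_of_pos hK, norm_exp, norm_div,
    norm_one]
  simp [div_eq_inv_mul, mul_comm]

lemma max_exp_sub_le {K a : ℝ} (hK : 0 < K) (ha : 1 ≤ a) (x : ℝ) :
    max (Real.exp x - K) 0 ≤ K ^ (1 - a) * Real.exp (a * x) := by
  refine max_le ?_ (by positivity)
  rcases le_total (Real.exp x) K with hxK | hKx
  · linarith [show 0 ≤ K ^ (1 - a) * Real.exp (a * x) by positivity]
  · have hpow : Real.exp x ^ (1 - a) ≤ K ^ (1 - a) :=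
      Real.rpow_le_rpow_of_nonpos hK hKx (by linarith)
    calc Real.exp x - K ≤ Real.exp x ^ (1 - a) * Real.exp (a * x) := by
          rw [← Real.exp_mul, ← Real.exp_add]; ring_nf; linarith
      _ ≤ K ^ (1 - a) * Real.exp (a * x) := by gcongr

section RandomVariable

variable {Ω : Type*} [MeasurableSpace Ω] {P : Measure Ω} {W : Ω → ℝ} {K a : ℝ}

lemma integrable_max_exp_sub (hK : 0 < K) (ha : 1 ≤ a) (hW : Measurable W)
    (hint : Integrable (fun ω => Real.exp (a * W ω)) P) :
    Integrable (fun ω => max (Real.exp (W ω) - K) 0) P := by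
  refine (hint.const_mul (K ^ (1 - a))).mono' (by fun_prop : Measurable _).aestronglyMeasurable
    (Filter.Eventually.of_forall fun ω => ?_)
  rw [Real.norm_of_nonneg (le_max_right _ _)]
  exact max_exp_sub_le hK ha (W ω)

lemma integral_callIntegrand_comp (s : ℝ) :
    ∫ ω, callIntegrand K a (W ω) s ∂P =
      (K : ℂ) ^ (1 - ((a : ℂ) + s * I)) * (∫ ω, cexp (((a : ℂ) + s * I) * W ω) ∂P) /
        (((a : ℂ) + s * I) * ((a + s * I) - 1)) := by
  simp only [callIntegrand, mul_div_assoc, integral_const_mul]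
  rw [integral_div]

lemma integrable_callIntegrand_prod [SFinite P] (hW : Measurable W) (hK : 0 < K) (ha : 1 < a)
    (hint : Integrable (fun ω => Real.exp (a * W ω)) P) :
    Integrable (Function.uncurry fun s ω => callIntegrand K a (W ω) s) (volume.prod P) := by
  refine ((integrable_inv_mul_sub_one ha).norm.mul_prod (hint.const_mul (K ^ (1 - a)))).mono'
    ?_ (Filter.Eventually.of_forall fun p => (norm_callIntegrand hK a _ _).le)
  have : Measurable fun p : ℝ × Ω => callIntegrand K a (W p.2) p.1 := by
    unfold callIntegrand
    fun_prop
  exact this.aestronglyMeasurable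

end RandomVariable

/-- Core pricing identity for average-price Geometric Asian call options: if `K > 0`,
`a > 1` and `E[e^{aW}] < ∞`, then the call payoff `(e^W - K)_+` is integrable, the
transform integrand is integrable over the vertical line, and
`E[(e^W - K)_+] = (1/(2π)) ∫ K^{1-(a+is)} E[e^{(a+is)W}] / ((a+is)(a+is-1)) ds`. -/
theorem asian_call_pricing_identity
    {Ω : Type*} [MeasurableSpace Ω] (P : Measure Ω) [IsProbabilityMeasure P]
    (W : Ω → ℝ) (hW : Measurable W) (K a : ℝ) (hK : 0 < K) (ha : 1 < a)
    (hint : Integrable (fun ω => Real.exp (a * W ω)) P) :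
    Integrable (fun ω => max (Real.exp (W ω) - K) 0) P ∧
    Integrable (fun s : ℝ =>
      (K : ℂ) ^ ((1 : ℂ) - ((a : ℂ) + s * Complex.I)) *
        (∫ ω, Complex.exp (((a : ℂ) + s * Complex.I) * (W ω : ℂ)) ∂P) /
        (((a : ℂ) + s * Complex.I) * (((a : ℂ) + s * Complex.I) - 1))) ∧
    ((∫ ω, max (Real.exp (W ω) - K) 0 ∂P : ℝ) : ℂ)
      = (1 / (2 * Real.pi) : ℂ) * ∫ s : ℝ,
          (K : ℂ) ^ ((1 : ℂ) - ((a : ℂ) + s * Complex.I)) *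
            (∫ ω, Complex.exp (((a : ℂ) + s * Complex.I) * (W ω : ℂ)) ∂P) /
            (((a : ℂ) + s * Complex.I) * (((a : ℂ) + s * Complex.I) - 1)) := by
  have hF := integrable_callIntegrand_prod hW hK ha hint
  simp_rw [← integral_callIntegrand_comp]
  refine ⟨integrable_max_exp_sub hK ha.le hW hint, hF.integral_prod_left, ?_⟩
  rw [integral_integral_swap hF]
  simp_rw [integral_callIntegrand hK ha]
  rw [integral_complex_ofReal, integral_const_mul]
  push_cast
  field_simp
end

section
/- Let (Ω, F, P) be a probability space, W : Ω → ℝ a random variable, K > 0 and b < 0 real numbers, and suppose E[e^{bW}] < ∞. Then the function s ↦ K^{1-(b+is)} · E[e^{(b+is)W}] / ((b+is)(b+is-1)) is Lebesgue integrable over ℝ, and E[max(K - e^W, 0)] = (1/(2π)) · ∫_{-∞}^{∞} K^{1-(b+is)} · E[e^{(b+is)W}] / ((b+is)(b+is-1)) ds, where the complex integral on the right equals the real number on the left. -/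
/-!
The put payoff `y ↦ (K - y)_+` has Mellin transform `K^(w+1) / (w (w+1))` for `Re w > 0`, which
is integrable along vertical lines. Mellin inversion on the line `Re w = -b`, read in the variable
`y = e^x`, gives `(K - e^x)_+ = (1/2π) ∫ e^((b+is)x) K^(1-(b+is)) / ((b+is)(b+is-1)) ds`. Put
`x = W` and take expectations: Fubini applies since `|e^((b+is)W)| = e^(bW)` is integrable.
-/

open MeasureTheory Complex Set Filter

noncomputable def putPayoff (K : ℝ) (y : ℝ) : ℂ := ((max (K - y) 0 : ℝ) : ℂ)

lemma continuous_putPayoff (K : ℝ) : Continuous (putPayoff K) := by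
  unfold putPayoff; fun_prop

lemma hasMellin_putPayoff {K : ℝ} (hK : 0 < K) {s : ℂ} (hs : 0 < s.re) :
    HasMellin (putPayoff K) s (K ^ (s + 1) / (s * (s + 1))) := by
  have hs0 : s ≠ 0 := by rintro rfl; simp at hs
  have hs1 : s + 1 ≠ 0 := by
    intro h; have := congrArg re h; simp at this; linarith
  have hK0 : (K : ℂ) ≠ 0 := ofReal_ne_zero.mpr hK.ne'
  have hre : -1 < (s - 1).re := by simpa using hs
  have hre' : -1 < s.re := by linarith
  have hvanish : ∀ t ∈ Ioi 0 \ Ioc 0 K, (t : ℂ) ^ (s - 1) • putPayoff K t = 0 := by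
    rintro t ⟨ht0, ht⟩
    have hKt : K ≤ t := (not_le.mp fun htK => ht ⟨ht0, htK⟩).le
    simp [putPayoff, hKt]
  have hpoly : EqOn (fun t : ℝ => (t : ℂ) ^ (s - 1) • putPayoff K t)
      (fun t => K * (t : ℂ) ^ (s - 1) - (t : ℂ) ^ s) (Ioc 0 K) := by
    rintro t ⟨ht0, htK⟩
    have ht : (t : ℂ) ≠ 0 := ofReal_ne_zero.mpr ht0.ne'
    simp only [putPayoff, max_eq_left (sub_nonneg.mpr htK), smul_eq_mul, cpow_sub _ _ ht, cpow_one]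
    push_cast
    field_simp
  have hint₁ := intervalIntegral.intervalIntegrable_cpow' (a := 0) (b := K) hre
  have hint₂ := intervalIntegral.intervalIntegrable_cpow' (a := 0) (b := K) hre'
  have hint : IntegrableOn (fun t : ℝ => (t : ℂ) ^ (s - 1) • putPayoff K t) (Ioc 0 K) := by
    rw [integrableOn_congr_fun hpoly measurableSet_Ioc,
      ← intervalIntegrable_iff_integrableOn_Ioc_of_le hK.le]
    exact (hint₁.const_mul _).sub hint₂
  refine ⟨hint.of_forall_sdiff_eq_zero measurableSet_Ioi hvanish, ?_⟩
  rw [mellin, setIntegral_eq_of_subset_of_forall_sdiff_eq_zero measurableSet_Ioi Ioc_subset_Ioi_self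
    hvanish, setIntegral_congr_fun measurableSet_Ioc hpoly, ← intervalIntegral.integral_of_le hK.le,
    intervalIntegral.integral_sub (hint₁.const_mul _) hint₂, intervalIntegral.integral_const_mul,
    integral_cpow (Or.inl hre), integral_cpow (Or.inl hre'), sub_add_cancel, ofReal_zero,
    zero_cpow hs0, zero_cpow hs1, cpow_add _ _ hK0, cpow_one]
  field_simp
  ring

lemma mellin_putPayoff_neg {K : ℝ} (hK : 0 < K) {z : ℂ} (hz : z.re < 0) :
    mellin (putPayoff K) (-z) = K ^ (1 - z) / (z * (z - 1)) := by
  rw [(hasMellin_putPayoff hK (by simpa using hz)).2]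
  ring_nf

lemma norm_sq_le_norm_mul_add_one {w : ℂ} (hw : 0 ≤ w.re) : ‖w‖ ^ 2 ≤ ‖w * (w + 1)‖ := by
  have h : ‖w‖ ≤ ‖w + 1‖ := by
    rw [norm_def, norm_def]
    gcongr
    simp only [normSq_apply, add_re, add_im, one_re, one_im]
    nlinarith
  rw [sq, norm_mul]
  gcongr

lemma integrable_inv_mul_add_one_vertical {σ : ℝ} (hσ : 0 < σ) :
    Integrable fun t : ℝ => ((σ + t * I) * (σ + t * I + 1))⁻¹ := by
  have hdom : Integrable fun t : ℝ => (σ ^ 2 + t ^ 2)⁻¹ := by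
    refine ((integrable_inv_one_add_sq.comp_div hσ.ne').const_mul (σ ^ 2)⁻¹).congr
      (ae_of_all _ fun t => ?_)
    field_simp
  refine hdom.mono' (by fun_prop) (ae_of_all _ fun t => ?_)
  have hpos : 0 < σ ^ 2 + t ^ 2 := by positivity
  have hsq : ‖(σ : ℂ) + t * I‖ ^ 2 = σ ^ 2 + t ^ 2 := by
    rw [norm_add_mul_I, Real.sq_sqrt hpos.le]
  rw [norm_inv, ← hsq]
  exact inv_anti₀ (hsq ▸ hpos) (norm_sq_le_norm_mul_add_one (by simpa using hσ.le))

lemma verticalIntegrable_mellin_putPayoff {K σ : ℝ} (hK : 0 < K) (hσ : 0 < σ) :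
    VerticalIntegrable (mellin (putPayoff K)) σ := by
  have hmellin : ∀ t : ℝ, mellin (putPayoff K) (σ + t * I)
      = (K : ℂ) ^ (σ + t * I + 1) * ((σ + t * I) * (σ + t * I + 1))⁻¹ := fun t => by
    rw [(hasMellin_putPayoff hK (by simpa using hσ)).2, div_eq_mul_inv]
  simp only [VerticalIntegrable, hmellin]
  have hcpow : Continuous fun t : ℝ => (K : ℂ) ^ (σ + t * I + 1) :=
    Continuous.const_cpow (by fun_prop) (Or.inl (ofReal_ne_zero.mpr hK.ne'))
  refine (integrable_inv_mul_add_one_vertical hσ).bdd_mul (c := K ^ (σ + 1))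
    hcpow.aestronglyMeasurable (ae_of_all _ fun t => ?_)
  rw [norm_cpow_eq_rpow_re_of_pos hK]
  simp

lemma mellinInv_exp_eq_integral (F : ℂ → ℂ) (b x : ℝ) :
    mellinInv (-b) F (Real.exp x)
      = 1 / (2 * Real.pi) * ∫ s : ℝ, cexp ((b + s * I) * x) * F (-(b + s * I)) := by
  rw [mellinInv, real_smul, ← integral_neg_eq_self]
  simp only [cpow_def_of_ne_zero (ofReal_ne_zero.mpr (Real.exp_pos x).ne'),
    ← ofReal_log (Real.exp_pos x).le, Real.log_exp, smul_eq_mul]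
  push_cast
  congr 2 with s
  ring_nf

lemma putPayoff_exp_eq_integral {K b : ℝ} (hK : 0 < K) (hb : b < 0) (x : ℝ) :
    putPayoff K (Real.exp x)
      = 1 / (2 * Real.pi) *
          ∫ s : ℝ, cexp ((b + s * I) * x) * mellin (putPayoff K) (-(b + s * I)) := by
  have hσ : 0 < -b := neg_pos.mpr hb
  rw [← mellinInv_exp_eq_integral, mellinInv_mellin_eq _ _ (Real.exp_pos x)
    (hasMellin_putPayoff hK (by simpa using hσ)).1 (verticalIntegrable_mellin_putPayoff hK hσ)
    (continuous_putPayoff K).continuousAt]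

lemma integrable_cexp_mul_prod {Ω : Type*} [MeasurableSpace Ω] {μ : Measure Ω} [SFinite μ]
    {X : Ω → ℝ} (hX : Measurable X) {b : ℝ} (hb : Integrable (fun ω => Real.exp (b * X ω)) μ)
    {g : ℝ → ℂ} (hg : Integrable g) :
    Integrable (fun p : Ω × ℝ => cexp ((b + p.2 * I) * X p.1) * g p.2) (μ.prod volume) := by
  refine (hb.mul_prod hg.norm).mono' ?_ (ae_of_all _ fun p => ?_)
  · have hexp : Measurable fun p : Ω × ℝ => cexp ((b + p.2 * I) * X p.1) := by fun_prop
    exact hexp.aestronglyMeasurable.mul hg.1.comp_snd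
  · rw [norm_mul, norm_exp]
    simp

/-- Core pricing identity for average-strike Geometric Asian call options (after a
change of numeraire): if `K > 0`, `b < 0` and `E[e^{bW}] < ∞`, then the transform
integrand is integrable over the vertical line and
`E[(K - e^W)_+] = (1/(2π)) ∫ K^{1-(b+is)} E[e^{(b+is)W}] / ((b+is)(b+is-1)) ds`. -/
theorem asian_put_pricing_identity
    {Ω : Type*} [MeasurableSpace Ω] (P : Measure Ω) [IsProbabilityMeasure P]
    (W : Ω → ℝ) (hW : Measurable W) (K b : ℝ) (hK : 0 < K) (hb : b < 0)
    (hint : Integrable (fun ω => Real.exp (b * W ω)) P) :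
    Integrable (fun s : ℝ =>
      (K : ℂ) ^ ((1 : ℂ) - ((b : ℂ) + s * Complex.I)) *
        (∫ ω, Complex.exp (((b : ℂ) + s * Complex.I) * (W ω : ℂ)) ∂P) /
        (((b : ℂ) + s * Complex.I) * (((b : ℂ) + s * Complex.I) - 1))) ∧
    ((∫ ω, max (K - Real.exp (W ω)) 0 ∂P : ℝ) : ℂ)
      = (1 / (2 * Real.pi) : ℂ) * ∫ s : ℝ,
          (K : ℂ) ^ ((1 : ℂ) - ((b : ℂ) + s * Complex.I)) *
            (∫ ω, Complex.exp (((b : ℂ) + s * Complex.I) * (W ω : ℂ)) ∂P) /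
            (((b : ℂ) + s * Complex.I) * (((b : ℂ) + s * Complex.I) - 1)) := by
  set g : ℝ → ℂ := fun s => mellin (putPayoff K) (-(b + s * I))
  have hg : Integrable g :=
    (verticalIntegrable_mellin_putPayoff hK (neg_pos.mpr hb)).comp_neg.congr
      (ae_of_all _ fun s => by simp only [g]; push_cast; ring_nf)
  have hprod := integrable_cexp_mul_prod hW hint hg
  have hinner : ∀ s : ℝ, ∫ ω, cexp ((b + s * I) * W ω) * g s ∂P
      = K ^ (1 - (b + s * I)) * (∫ ω, cexp ((b + s * I) * W ω) ∂P)
          / ((b + s * I) * (b + s * I - 1)) := by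
    intro s
    rw [integral_mul_const]
    simp only [g]
    rw [mellin_putPayoff_neg hK (by simpa using hb)]
    ring
  simp_rw [← hinner]
  refine ⟨hprod.integral_prod_right, ?_⟩
  calc ((∫ ω, max (K - Real.exp (W ω)) 0 ∂P : ℝ) : ℂ)
      = ∫ ω, putPayoff K (Real.exp (W ω)) ∂P := integral_ofReal.symm
    _ = ∫ ω, (1 / (2 * Real.pi) * ∫ s : ℝ, cexp ((b + s * I) * W ω) * g s) ∂P :=
      integral_congr_ae (ae_of_all _ fun ω => putPayoff_exp_eq_integral hK hb (W ω))
    _ = _ := by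
      rw [integral_const_mul, integral_integral_swap hprod]
end
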